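/- arXiv:1210.5776 — 7 statements merged into one kernel-verified Lean document; each statement's English description precedes it below -/
import Mathlib

section
/- Let ξ and ϑ be independent real-valued random variables on a probability space, with ϑ > 0 almost surely and ϑ integrable. For an integer n ≥ 1 set φ_+^n(e) = P(ξ − ϑ/n ≤ e), φ_-^n(e) = P(ξ + ϑ/n ≤ e), φ_+(e) = P(ξ ≤ e) and φ_-(e) = P(ξ < e). Then for every n ≥ 1: ∫_ℝ |φ_+^n(e) − φ_+(e)| de ≤ E[ϑ]/n and ∫_ℝ |φ_-^n(e) − φ_-(e)| de ≤ E[ϑ]/n; in particular φ_+^n → φ_+ and φ_-^n → φ_- in L¹(ℝ) as n → ∞. -/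
/-!
If `f ≤ g` almost surely, the events `{g ≤ e} ⊆ {f ≤ e}` are nested up to a null set, so
`|P(f ≤ e) - P(g ≤ e)| = P(f ≤ e < g)`. Integrating over `e` and exchanging the integrals
(Tonelli) gives the expected length `E[g - f]` of the random interval `[f, g)`. With
`f = ξ - ϑ/n`, `g = ξ` (and `f = ξ`, `g = ξ + ϑ/n` for `φ_-`) this is exactly `E[ϑ]/n`.
-/

open MeasureTheory Filter Topology

section

variable {Ω : Type*} [MeasurableSpace Ω] {μ : Measure Ω}

lemma ofReal_abs_measureReal_sub_eq_measure_sdiff [IsFiniteMeasure μ] {s t : Set Ω}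
    (ht : MeasurableSet t) (hts : t ≤ᵐ[μ] s) :
    ENNReal.ofReal |μ.real s - μ.real t| = μ (s \ t) := by
  have hsplit : μ.real t + μ.real (s \ t) = μ.real s := by
    rw [measureReal_add_sdiff ht, measureReal_congr (union_ae_eq_right_iff_ae_subset.mpr hts)]
  rw [← hsplit, add_sub_cancel_left, abs_of_nonneg measureReal_nonneg, ofReal_measureReal]

lemma lintegral_measure_le_lt_eq [SFinite μ] {f g : Ω → ℝ} (hf : Measurable f)
    (hg : Measurable g) :
    ∫⁻ e, μ {ω | f ω ≤ e ∧ e < g ω} = ∫⁻ ω, ENNReal.ofReal (g ω - f ω) ∂μ := by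
  have hS : MeasurableSet {p : ℝ × Ω | f p.2 ≤ p.1 ∧ p.1 < g p.2} :=
    (measurableSet_le (hf.comp measurable_snd) measurable_fst).inter
      (measurableSet_lt measurable_fst (hg.comp measurable_snd))
  exact (Measure.prod_apply hS).symm.trans <| (Measure.prod_apply_symm hS).trans <|
    lintegral_congr fun ω => Real.volume_Ico (a := f ω) (b := g ω)

lemma lintegral_measure_lt_lt_eq [SFinite μ] {f g : Ω → ℝ} (hf : Measurable f)
    (hg : Measurable g) :
    ∫⁻ e, μ {ω | f ω < e ∧ e < g ω} = ∫⁻ ω, ENNReal.ofReal (g ω - f ω) ∂μ := by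
  have hS : MeasurableSet {p : ℝ × Ω | f p.2 < p.1 ∧ p.1 < g p.2} :=
    (measurableSet_lt (hf.comp measurable_snd) measurable_fst).inter
      (measurableSet_lt measurable_fst (hg.comp measurable_snd))
  exact (Measure.prod_apply hS).symm.trans <| (Measure.prod_apply_symm hS).trans <|
    lintegral_congr fun ω => Real.volume_Ioo (a := f ω) (b := g ω)

lemma lintegral_ofReal_abs_measureReal_le_sub_of_ae_le [IsFiniteMeasure μ] {f g : Ω → ℝ}
    (hf : Measurable f) (hg : Measurable g) (hfg : f ≤ᵐ[μ] g) :
    ∫⁻ e, ENNReal.ofReal |μ.real {ω | f ω ≤ e} - μ.real {ω | g ω ≤ e}|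
      = ∫⁻ ω, ENNReal.ofReal (g ω - f ω) ∂μ := by
  have hslice : ∀ e, ENNReal.ofReal |μ.real {ω | f ω ≤ e} - μ.real {ω | g ω ≤ e}|
      = μ {ω | f ω ≤ e ∧ e < g ω} := by
    intro e
    rw [ofReal_abs_measureReal_sub_eq_measure_sdiff (measurableSet_le hg measurable_const)]
    · congr 1
      ext ω
      simp only [Set.mem_sdiff, Set.mem_ofPred_eq, not_le]
    · filter_upwards [hfg] with ω hω hge using hω.trans hge
  rw [lintegral_congr hslice, lintegral_measure_le_lt_eq hf hg]

lemma lintegral_ofReal_abs_measureReal_le_sub_lt_of_ae_lt [IsFiniteMeasure μ] {f g : Ω → ℝ}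
    (hf : Measurable f) (hg : Measurable g) (hfg : ∀ᵐ ω ∂μ, f ω < g ω) :
    ∫⁻ e, ENNReal.ofReal |μ.real {ω | g ω ≤ e} - μ.real {ω | f ω < e}|
      = ∫⁻ ω, ENNReal.ofReal (g ω - f ω) ∂μ := by
  have hslice : ∀ e, ENNReal.ofReal |μ.real {ω | g ω ≤ e} - μ.real {ω | f ω < e}|
      = μ {ω | f ω < e ∧ e < g ω} := by
    intro e
    rw [abs_sub_comm,
      ofReal_abs_measureReal_sub_eq_measure_sdiff (measurableSet_le hg measurable_const)]
    · congr 1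
      ext ω
      simp only [Set.mem_sdiff, Set.mem_ofPred_eq, not_le]
    · filter_upwards [hfg] with ω hω hge using hω.trans_le hge
  rw [lintegral_congr hslice, lintegral_measure_lt_lt_eq hf hg]

end

theorem stmt_4_general {Ω : Type*} [MeasurableSpace Ω] (P : MeasureTheory.Measure Ω)
    [MeasureTheory.IsProbabilityMeasure P]
    (ξ ϑ : Ω → ℝ) (hξ : Measurable ξ) (hϑ : Measurable ϑ)
    (hpos : ∀ᵐ ω ∂P, 0 < ϑ ω) (hint : MeasureTheory.Integrable ϑ P) :
    (∀ n : ℕ, 1 ≤ n →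
      (∫⁻ e : ℝ, ENNReal.ofReal
          |(P {ω | ξ ω - ϑ ω / n ≤ e}).toReal - (P {ω | ξ ω ≤ e}).toReal| ≤
        ENNReal.ofReal ((∫ ω, ϑ ω ∂P) / n)) ∧
      (∫⁻ e : ℝ, ENNReal.ofReal
          |(P {ω | ξ ω + ϑ ω / n ≤ e}).toReal - (P {ω | ξ ω < e}).toReal| ≤
        ENNReal.ofReal ((∫ ω, ϑ ω ∂P) / n))) ∧
    Filter.Tendsto (fun n : ℕ => ∫⁻ e : ℝ, ENNReal.ofReal
        |(P {ω | ξ ω - ϑ ω / n ≤ e}).toReal - (P {ω | ξ ω ≤ e}).toReal|)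
      Filter.atTop (nhds 0) ∧
    Filter.Tendsto (fun n : ℕ => ∫⁻ e : ℝ, ENNReal.ofReal
        |(P {ω | ξ ω + ϑ ω / n ≤ e}).toReal - (P {ω | ξ ω < e}).toReal|)
      Filter.atTop (nhds 0) := by
  have hmean : ∀ n : ℕ,
      ∫⁻ ω, ENNReal.ofReal (ϑ ω / n) ∂P = ENNReal.ofReal ((∫ ω, ϑ ω ∂P) / n) := fun n => by
    rw [← integral_div, ofReal_integral_eq_lintegral_ofReal (hint.div_const _)
        (hpos.mono fun ω h => by positivity)]
  have hplus : ∀ n : ℕ, ∫⁻ e : ℝ, ENNReal.ofReal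
      |(P {ω | ξ ω - ϑ ω / n ≤ e}).toReal - (P {ω | ξ ω ≤ e}).toReal|
        = ENNReal.ofReal ((∫ ω, ϑ ω ∂P) / n) := fun n => by
    have h := lintegral_ofReal_abs_measureReal_le_sub_of_ae_le
      (f := fun ω => ξ ω - ϑ ω / n) (by fun_prop) hξ
      (hpos.mono fun ω h => sub_le_self _ (by positivity))
    simp only [sub_sub_cancel, hmean] at h
    exact h
  have hminus : ∀ n : ℕ, 1 ≤ n → ∫⁻ e : ℝ, ENNReal.ofReal
      |(P {ω | ξ ω + ϑ ω / n ≤ e}).toReal - (P {ω | ξ ω < e}).toReal|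
        = ENNReal.ofReal ((∫ ω, ϑ ω ∂P) / n) := fun n hn => by
    have h := lintegral_ofReal_abs_measureReal_le_sub_lt_of_ae_lt
      (g := fun ω => ξ ω + ϑ ω / n) hξ (by fun_prop)
      (hpos.mono fun ω h => lt_add_of_pos_right _ (by positivity))
    simp only [add_sub_cancel_left, hmean] at h
    exact h
  have hbound : Tendsto (fun n : ℕ => ENNReal.ofReal ((∫ ω, ϑ ω ∂P) / n)) atTop (𝓝 0) := by
    simpa only [ENNReal.ofReal_zero] using
      ENNReal.tendsto_ofReal (tendsto_const_div_atTop_nhds_zero_nat (∫ ω, ϑ ω ∂P))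
  refine ⟨fun n hn => ⟨(hplus n).le, (hminus n hn).le⟩, ?_, ?_⟩
  · simpa only [hplus] using hbound
  · exact hbound.congr' ((eventually_ge_atTop 1).mono fun n hn => (hminus n hn).symm)

/-- L¹ estimate for the mollified distribution functions: for independent `ξ, ϑ`
with `ϑ > 0` a.s. and integrable, for every `n ≥ 1`,
`∫_ℝ |φ_+^n - φ_+| de ≤ E[ϑ]/n` and `∫_ℝ |φ_-^n - φ_-| de ≤ E[ϑ]/n`;
in particular these integrals tend to `0` as `n → ∞`. -/
theorem stmt_4 {Ω : Type*} [MeasurableSpace Ω] (P : MeasureTheory.Measure Ω)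
    [MeasureTheory.IsProbabilityMeasure P]
    (ξ ϑ : Ω → ℝ) (hξ : Measurable ξ) (hϑ : Measurable ϑ)
    (hindep : ProbabilityTheory.IndepFun ξ ϑ P)
    (hpos : ∀ᵐ ω ∂P, 0 < ϑ ω) (hint : MeasureTheory.Integrable ϑ P) :
    (∀ n : ℕ, 1 ≤ n →
      (∫⁻ e : ℝ, ENNReal.ofReal
          |(P {ω | ξ ω - ϑ ω / n ≤ e}).toReal - (P {ω | ξ ω ≤ e}).toReal| ≤
        ENNReal.ofReal ((∫ ω, ϑ ω ∂P) / n)) ∧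
      (∫⁻ e : ℝ, ENNReal.ofReal
          |(P {ω | ξ ω + ϑ ω / n ≤ e}).toReal - (P {ω | ξ ω < e}).toReal| ≤
        ENNReal.ofReal ((∫ ω, ϑ ω ∂P) / n))) ∧
    Filter.Tendsto (fun n : ℕ => ∫⁻ e : ℝ, ENNReal.ofReal
        |(P {ω | ξ ω - ϑ ω / n ≤ e}).toReal - (P {ω | ξ ω ≤ e}).toReal|)
      Filter.atTop (nhds 0) ∧
    Filter.Tendsto (fun n : ℕ => ∫⁻ e : ℝ, ENNReal.ofReal
        |(P {ω | ξ ω + ϑ ω / n ≤ e}).toReal - (P {ω | ξ ω < e}).toReal|)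
      Filter.atTop (nhds 0) :=
  stmt_4_general P ξ ϑ hξ hϑ hpos hint
end

section
/- Let 0 ≤ t0 < T and Λ, e ∈ ℝ. Define E : [t0, T] → ℝ by: E(t) = e − (t − t0) if e − (T − t0) > Λ; E(t) = e if e < Λ; and E(t) = e − ((e − Λ)/(T − t0))·(t − t0) if Λ ≤ e ≤ Λ + (T − t0). Then E(t0) = e and, for every t ∈ [t0, T), E is differentiable at t with E'(t) = −ψ((E(t) − Λ)/(T − t)). -/
/-- `ψ(e) = e·1_{[0,1]}(e) + 1_{(1,∞)}(e)`. -/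
noncomputable def psi (e : ℝ) : ℝ := if e < 0 then 0 else if e ≤ 1 then e else 1

/-- The characteristics of the inviscid Burgers equation: the explicit piecewise
function `E` satisfies `E(t0) = e` and `E'(t) = -ψ((E(t) - Λ)/(T - t))` on `[t0, T)`. -/
theorem stmt_7 (t0 T Λ e : ℝ) (h0 : 0 ≤ t0) (hT : t0 < T)
    (E : ℝ → ℝ)
    (hE : ∀ t, E t =
      if Λ + (T - t0) < e then e - (t - t0)
      else if e < Λ then e
      else e - ((e - Λ) / (T - t0)) * (t - t0)) :
    E t0 = e ∧
    ∀ t ∈ Set.Ico t0 T, HasDerivAt E (-psi ((E t - Λ) / (T - t))) t := by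
  rcases lt_or_ge (Λ + (T - t0)) e with h1 | h1
  · have hEf : E = fun t => e - (t - t0) := funext fun t => by rw [hE t, if_pos h1]
    constructor
    · rw [hEf]; simp
    · intro t ht
      have htT : (0:ℝ) < T - t := by linarith [ht.2]
      have hx : 1 < (E t - Λ) / (T - t) := by
        rw [lt_div_iff₀ htT, hEf]; simp only; linarith
      have hψ : psi ((E t - Λ) / (T - t)) = 1 := by
        unfold psi
        rw [if_neg (by linarith), if_neg (by linarith)]
      rw [hψ, hEf]
      simpa using ((hasDerivAt_id t).sub_const t0).const_sub e
  · rcases lt_or_ge e Λ with h2 | h2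
    · have hEf : E = fun _ => e := funext fun t => by
        rw [hE t, if_neg (not_lt.2 h1), if_pos h2]
      constructor
      · rw [hEf]
      · intro t ht
        have htT : (0:ℝ) < T - t := by linarith [ht.2]
        have hx : (E t - Λ) / (T - t) < 0 := by
          apply div_neg_of_neg_of_pos _ htT
          rw [hEf]; simp only; linarith
        have hψ : psi ((E t - Λ) / (T - t)) = 0 := by
          unfold psi; rw [if_pos hx]
        rw [hψ, hEf, neg_zero]
        exact hasDerivAt_const t e
    · set c : ℝ := (e - Λ) / (T - t0) with hc
      have hTt0 : (0:ℝ) < T - t0 := by linarith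
      have hc0 : 0 ≤ c := div_nonneg (by linarith) hTt0.le
      have hc1 : c ≤ 1 := by
        rw [hc, div_le_one hTt0]; linarith
      have hceΛ : c * (T - t0) = e - Λ := div_mul_cancel₀ _ hTt0.ne'
      have hEf : E = fun t => e - c * (t - t0) := funext fun t => by
        rw [hE t, if_neg (not_lt.2 h1), if_neg (not_lt.2 h2)]
      constructor
      · rw [hEf]; simp
      · intro t ht
        have htT : (0:ℝ) < T - t := by linarith [ht.2]
        have hx : (E t - Λ) / (T - t) = c := by
          rw [hEf]
          have : e - c * (t - t0) - Λ = c * (T - t) := by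
            have : e - Λ = c * (T - t0) := hceΛ.symm
            nlinarith [this]
          simp only
          rw [this, mul_div_assoc, div_self htT.ne', mul_one]
        have hψ : psi ((E t - Λ) / (T - t)) = c := by
          rw [hx]; unfold psi
          rw [if_neg (not_lt.2 hc0), if_pos hc1]
        rw [hψ, hEf]
        have : HasDerivAt (fun t => e - c * (t - t0)) (-(c * 1)) t :=
          (((hasDerivAt_id t).sub_const t0).const_mul c).const_sub e
        simpa using this
end

section
/- Let 0 ≤ t0 < T, Λ, e ∈ ℝ, and let g : [t0, T) → ℝ be continuous. Define Z : [t0, T) → ℝ by Z(t) = Λ + (T − t)·[(e − Λ)/(T − t0) + ∫_{t0}^t g(s)/(T − s) ds]. Then Z(t0) = e and, for every t ∈ [t0, T), Z is differentiable at t with Z'(t) = −(Z(t) − Λ)/(T − t) + g(t). If moreover ∫_{t0}^T |g(s)|/(T − s) ds < ∞, then Z(t) → Λ as t → T from the left. -/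
/-!
Differentiating the product `(T - t) · (c + ∫_{t0}^t g/(T - ·))` by the fundamental theorem of
calculus gives the bridge equation. When `|g|/(T - ·)` is integrable on `[t0, T)`, the primitive
`t ↦ ∫_{t0}^t g/(T - ·)` is continuous on the closed interval `[t0, T]`, so the formula for `Z`
is continuous up to `T`, where it takes the value `Λ`.
-/

open Set Filter Topology MeasureTheory

theorem hasDerivWithinAt_integral_Ico {E : Type*} [NormedAddCommGroup E] [NormedSpace ℝ E]
    [CompleteSpace E] {f : ℝ → E} {a b t : ℝ} (hf : ContinuousOn f (Ico a b))
    (ht : t ∈ Ico a b) :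
    HasDerivWithinAt (fun u => ∫ s in a..u, f s) (f t) (Ico a b) t := by
  have hnhds : 𝓝[Icc a b] t = 𝓝[Ico a b] t := by
    rw [← Icc_sdiff_right, ht.2.ne.nhdsWithin_sdiff_singleton]
  have : Fact (t ∈ Icc a b) := ⟨Ico_subset_Icc_self ht⟩
  refine (intervalIntegral.integral_hasDerivWithinAt_right (s := Icc a b) (t := Icc a b)
    ((hf.mono ?_).intervalIntegrable) ?_ ?_).mono Ico_subset_Icc_self
  · rw [uIcc_of_le ht.1]
    exact Icc_subset_Ico_right ht.2
  · rw [hnhds]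
    exact hf.stronglyMeasurableAtFilter_nhdsWithin measurableSet_Ico t
  · rw [ContinuousWithinAt, hnhds]
    exact hf t ht

theorem tendsto_sub_mul_add_primitive_nhdsLT {f : ℝ → ℝ} {a b : ℝ} (hab : a < b)
    (hf : IntegrableOn f (Ico a b)) (c : ℝ) :
    Tendsto (fun t => (b - t) * (c + ∫ s in a..t, f s)) (𝓝[<] b) (𝓝 0) := by
  have hprim : ContinuousOn (fun t => ∫ s in a..t, f s) (Icc a b) := by
    rw [← uIcc_of_le hab.le]
    refine intervalIntegral.continuousOn_primitive_interval ?_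
    rwa [uIcc_of_le hab.le, integrableOn_Icc_iff_integrableOn_Ico]
  have hcont : ContinuousOn (fun t => (b - t) * (c + ∫ s in a..t, f s)) (Icc a b) := by
    fun_prop
  have hb := (continuousWithinAt_Ico_iff_Iio hab).1
    ((hcont b (right_mem_Icc.2 hab.le)).mono Ico_subset_Icc_self)
  rwa [ContinuousWithinAt, sub_self, zero_mul] at hb

theorem stmt_8_general (t0 T Λ e : ℝ) (hT : t0 < T)
    (g : ℝ → ℝ) (hg : ContinuousOn g (Set.Ico t0 T))
    (Z : ℝ → ℝ)
    (hZ : ∀ t, Z t = Λ + (T - t) * ((e - Λ) / (T - t0) + ∫ s in t0..t, g s / (T - s))) :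
    Z t0 = e ∧
    (∀ t ∈ Set.Ico t0 T,
      HasDerivWithinAt Z (-(Z t - Λ) / (T - t) + g t) (Set.Ico t0 T) t) ∧
    (MeasureTheory.IntegrableOn (fun s => |g s| / (T - s)) (Set.Ico t0 T) →
      Filter.Tendsto Z (nhdsWithin T (Set.Iio T)) (nhds Λ)) := by
  set c := (e - Λ) / (T - t0)
  set φ : ℝ → ℝ := fun s => g s / (T - s)
  have hφ : ContinuousOn φ (Ico t0 T) :=
    hg.div (by fun_prop) fun s hs => (sub_pos.2 hs.2).ne'
  have hZφ : Z = fun t => Λ + (T - t) * (c + ∫ s in t0..t, φ s) := funext hZ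
  refine ⟨?_, fun t ht => ?_, fun hint => ?_⟩
  · rw [hZ, intervalIntegral.integral_same, add_zero, mul_div_cancel₀ _ (sub_pos.2 hT).ne']
    ring
  · have hprod : HasDerivWithinAt (fun u => Λ + (T - u) * (c + ∫ s in t0..u, φ s))
        (-1 * (c + ∫ s in t0..t, φ s) + (T - t) * φ t) (Ico t0 T) t :=
      (((hasDerivWithinAt_id t _).const_sub T).mul
        ((hasDerivWithinAt_integral_Ico hφ ht).const_add c)).const_add Λ
    rw [hZφ]
    convert hprod using 1
    have hTt : T - t ≠ 0 := (sub_pos.2 ht.2).ne'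
    rw [show (T - t) * φ t = g t from mul_div_cancel₀ _ hTt]
    field_simp
    ring
  · have hφint : IntegrableOn φ (Ico t0 T) := by
      refine (integrable_norm_iff (hφ.aestronglyMeasurable measurableSet_Ico)).1
        (hint.congr_fun (fun s hs => ?_) measurableSet_Ico)
      rw [norm_div, Real.norm_eq_abs, Real.norm_eq_abs, abs_of_pos (sub_pos.2 hs.2)]
    rw [hZφ]
    simpa using tendsto_const_nhds.add (tendsto_sub_mul_add_primitive_nhdsLT hT hφint c)

/-- Variation-of-constants formula for the bridge equation: with
`Z(t) = Λ + (T - t)·[(e - Λ)/(T - t0) + ∫_{t0}^t g(s)/(T - s) ds]`, one has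
`Z(t0) = e`, `Z'(t) = -(Z(t) - Λ)/(T - t) + g(t)` on `[t0, T)`, and if
`∫_{t0}^T |g(s)|/(T - s) ds < ∞` then `Z(t) → Λ` as `t → T⁻`. -/
theorem stmt_8 (t0 T Λ e : ℝ) (h0 : 0 ≤ t0) (hT : t0 < T)
    (g : ℝ → ℝ) (hg : ContinuousOn g (Set.Ico t0 T))
    (Z : ℝ → ℝ)
    (hZ : ∀ t, Z t = Λ + (T - t) * ((e - Λ) / (T - t0) + ∫ s in t0..t, g s / (T - s))) :
    Z t0 = e ∧
    (∀ t ∈ Set.Ico t0 T,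
      HasDerivWithinAt Z (-(Z t - Λ) / (T - t) + g t) (Set.Ico t0 T) t) ∧
    (MeasureTheory.IntegrableOn (fun s => |g s| / (T - s)) (Set.Ico t0 T) →
      Filter.Tendsto Z (nhdsWithin T (Set.Iio T)) (nhds Λ)) :=
  stmt_8_general t0 T Λ e hT g hg Z hZ
end

section
/- Let 0 < ℓ1 ≤ ℓ2 and let C > 0, β ∈ (0,1], ε ∈ (0,1). Then there exists δ1 > 0, depending only on ℓ1, ℓ2, C, β and ε, such that the following holds: for every differentiable F : ℝ → ℝ with F(0) = 0 and ℓ1 ≤ F'(z) ≤ ℓ2 for all z ∈ ℝ, every y ∈ [ε, 1 − ε], every v ∈ [0, 1] and every δ ∈ (0, δ1], if ℓ := ∫_0^1 F'(λ v) dλ (so that ℓ ∈ [ℓ1, ℓ2] and ℓ·v = F(v)) and |v − ψ(F(y)/ℓ)| ≤ C·δ^β, then |v − y| < ε. -/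
/-!
Write `ℓ = ∫₀¹ F'(λv) dλ`, so that `ℓ₁ ≤ ℓ ≤ ℓ₂` and `ℓ v = F v`. Since `F(y)/ℓ ≥ 0`, `ψ` can
only clip `F(y)/ℓ` at `1`, and that cannot happen once `C δ^β < ε`: it would force
`v ≥ 1 - C δ^β > 1 - ε ≥ y`, while `F v = ℓ v ≤ ℓ < F y` forces `v < y`. Otherwise
`ℓ₁ |v - y| ≤ |F v - F y| = ℓ |v - F(y)/ℓ| ≤ ℓ₂ C δ^β`, and `δ₁` is chosen so that the
right-hand side is at most `ℓ₁ ε / 2`.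
-/

section MeanDerivative

variable {F F' : ℝ → ℝ} {ℓ1 ℓ2 : ℝ}

lemma intervalIntegrable_deriv_comp_mul_of_le (hF : ∀ z, HasDerivAt F (F' z) z)
    (hl : ∀ z, 0 ≤ F' z) (hu : ∀ z, F' z ≤ ℓ2) (v a b : ℝ) :
    IntervalIntegrable (fun l => F' (l * v)) MeasureTheory.volume a b := by
  have hmeas : Measurable fun l : ℝ => F' (l * v) := by
    rw [show F' = deriv F from funext fun z => ((hF z).deriv).symm]
    exact (measurable_deriv F).comp (measurable_id.mul_const v)
  refine (intervalIntegrable_const (c := ℓ2)).mono_fun' hmeas.aestronglyMeasurable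
    (Filter.Eventually.of_forall fun l => (Real.norm_of_nonneg (hl _)).trans_le (hu _))

lemma integral_deriv_comp_mul_mul_self (hF : ∀ z, HasDerivAt F (F' z) z)
    (hl : ∀ z, 0 ≤ F' z) (hu : ∀ z, F' z ≤ ℓ2) (v : ℝ) :
    (∫ l in (0 : ℝ)..1, F' (l * v)) * v = F v - F 0 := by
  have hderiv : ∀ l ∈ Set.uIcc (0 : ℝ) 1,
      HasDerivAt (fun l => F (l * v)) (F' (l * v) * v) l := fun l _ => by
    simpa [Function.comp_def] using (hF (l * v)).comp l ((hasDerivAt_id l).mul_const v)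
  rw [← intervalIntegral.integral_mul_const, intervalIntegral.integral_eq_sub_of_hasDerivAt
    hderiv ((intervalIntegrable_deriv_comp_mul_of_le hF hl hu v 0 1).mul_const v)]
  simp

lemma integral_deriv_comp_mul_mem_Icc (hF : ∀ z, HasDerivAt F (F' z) z)
    (hl1 : 0 ≤ ℓ1) (hl : ∀ z, ℓ1 ≤ F' z) (hu : ∀ z, F' z ≤ ℓ2) (v : ℝ) :
    ∫ l in (0 : ℝ)..1, F' (l * v) ∈ Set.Icc ℓ1 ℓ2 := by
  have hint := intervalIntegrable_deriv_comp_mul_of_le hF (fun z => hl1.trans (hl z)) hu v 0 1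
  constructor
  · simpa using intervalIntegral.integral_mono_on zero_le_one intervalIntegrable_const hint
      fun l _ => hl (l * v)
  · simpa using intervalIntegral.integral_mono_on zero_le_one hint intervalIntegrable_const
      fun l _ => hu (l * v)

end MeanDerivative

lemma mul_abs_sub_le_abs_sub_of_growth {F : ℝ → ℝ} {ℓ1 : ℝ}
    (hgrowth : ∀ ⦃a b⦄, a ≤ b → ℓ1 * (b - a) ≤ F b - F a) (a b : ℝ) :
    ℓ1 * |a - b| ≤ |F a - F b| := by
  rcases le_total a b with hab | hba
  · rw [abs_sub_comm a, abs_sub_comm (F a), abs_of_nonneg (sub_nonneg.2 hab)]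
    exact (hgrowth hab).trans (le_abs_self _)
  · rw [abs_of_nonneg (sub_nonneg.2 hba)]
    exact (hgrowth hba).trans (le_abs_self _)

lemma mul_abs_sub_le_of_abs_sub_psi_le {F : ℝ → ℝ} {ℓ ℓ1 ℓ2 y v η ε : ℝ}
    (hgrowth : ∀ ⦃a b⦄, a ≤ b → ℓ1 * (b - a) ≤ F b - F a) (hℓ1 : 0 < ℓ1)
    (hℓ : ℓ ∈ Set.Icc ℓ1 ℓ2) (hFv : ℓ * v = F v) (hv : v ≤ 1) (hFy : 0 ≤ F y)
    (hy : y ≤ 1 - ε) (hψ : |v - psi (F y / ℓ)| ≤ η) (hηε : η < ε) :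
    ℓ1 * |v - y| ≤ ℓ2 * η := by
  have hℓ0 : 0 < ℓ := hℓ1.trans_le hℓ.1
  have hnonneg : ¬ F y / ℓ < 0 := not_lt.2 (div_nonneg hFy hℓ0.le)
  by_cases hclip : F y / ℓ ≤ 1
  · rw [psi, if_neg hnonneg, if_pos hclip] at hψ
    calc ℓ1 * |v - y| ≤ |F v - F y| := mul_abs_sub_le_abs_sub_of_growth hgrowth v y
      _ = ℓ * |v - F y / ℓ| := by
        rw [← abs_of_pos hℓ0, ← abs_mul, abs_of_pos hℓ0, mul_sub, mul_div_cancel₀ _ hℓ0.ne', hFv]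
      _ ≤ ℓ2 * η := mul_le_mul hℓ.2 hψ (abs_nonneg _) (hℓ0.le.trans hℓ.2)
  · rw [psi, if_neg hnonneg, if_neg hclip] at hψ
    have hyv : y < v := by linarith [(abs_le.1 hψ).1]
    have hFvy : F v < F y :=
      calc F v = ℓ * v := hFv.symm
        _ ≤ ℓ := mul_le_of_le_one_right hℓ0.le hv
        _ < F y := (one_lt_div hℓ0).1 (not_le.1 hclip)
    nlinarith [hgrowth hyv.le]

lemma exists_pos_forall_mul_rpow_le {C β η : ℝ} (hC : 0 < C) (hβ : 0 < β) (hη : 0 < η) :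
    ∃ δ1 > (0 : ℝ), ∀ δ : ℝ, 0 < δ → δ ≤ δ1 → C * δ ^ β ≤ η := by
  refine ⟨(η / C) ^ β⁻¹, by positivity, fun δ hδ hδ1 => ?_⟩
  calc C * δ ^ β ≤ C * ((η / C) ^ β⁻¹) ^ β := by gcongr
    _ = η := by
      rw [← Real.rpow_mul (by positivity), inv_mul_cancel₀ hβ.ne', Real.rpow_one,
        mul_div_cancel₀ _ hC.ne']

theorem stmt_9_general (ℓ1 ℓ2 C β ε : ℝ) (hℓ1 : 0 < ℓ1) (hℓ12 : ℓ1 ≤ ℓ2) (hC : 0 < C)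
    (hβ0 : 0 < β) (hε0 : 0 < ε) :
    ∃ δ1 > (0 : ℝ), ∀ F F' : ℝ → ℝ,
      (∀ z : ℝ, HasDerivAt F (F' z) z) → F 0 = 0 →
      (∀ z : ℝ, ℓ1 ≤ F' z) → (∀ z : ℝ, F' z ≤ ℓ2) →
      ∀ y ∈ Set.Icc ε (1 - ε), ∀ v ∈ Set.Icc (0 : ℝ) 1, ∀ δ : ℝ, 0 < δ → δ ≤ δ1 →
        |v - psi (F y / ∫ l in (0 : ℝ)..1, F' (l * v))| ≤ C * δ ^ β →
        |v - y| < ε := by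
  have hℓ2 : 0 < ℓ2 := hℓ1.trans_le hℓ12
  obtain ⟨δ1, hδ1, hsmall⟩ :=
    exists_pos_forall_mul_rpow_le (η := ε * ℓ1 / (2 * ℓ2)) hC hβ0 (by positivity)
  refine ⟨δ1, hδ1, fun F F' hF hF0 hl hu y hy v hv δ hδ hδδ1 hψ => ?_⟩
  have hgrowth := mul_sub_le_image_sub_of_le_deriv (fun z => (hF z).differentiableAt)
    (fun z => (hF z).deriv ▸ hl z)
  have hFy : 0 ≤ F y := by
    nlinarith [hgrowth (hε0.le.trans hy.1), hy.1]
  have hFv : (∫ l in (0 : ℝ)..1, F' (l * v)) * v = F v := by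
    rw [integral_deriv_comp_mul_mul_self hF (fun z => hℓ1.le.trans (hl z)) hu, hF0, sub_zero]
  have hη : ε * ℓ1 / (2 * ℓ2) < ε := by
    rw [div_lt_iff₀ (by positivity)]; nlinarith
  have key := mul_abs_sub_le_of_abs_sub_psi_le hgrowth hℓ1
    (integral_deriv_comp_mul_mem_Icc hF hℓ1.le hl hu v) hFv hv.2 hFy hy.2
    (hψ.trans (hsmall δ hδ hδδ1)) hη
  have hhalf : ℓ2 * (ε * ℓ1 / (2 * ℓ2)) = ℓ1 * (ε / 2) := by field_simp
  linarith [le_of_mul_le_mul_left (key.trans hhalf.le) hℓ1]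

/-- Real-variable content of Lemma `lem:26:2:1`: there is `δ1 > 0`, depending only
on `ℓ1, ℓ2, C, β, ε`, such that for every differentiable `F` with `F(0) = 0` and
`ℓ1 ≤ F' ≤ ℓ2`, every `y ∈ [ε, 1-ε]`, `v ∈ [0,1]` and `δ ∈ (0, δ1]`, with
`ℓ = ∫_0^1 F'(λ v) dλ`, if `|v - ψ(F(y)/ℓ)| ≤ C δ^β` then `|v - y| < ε`. -/
theorem stmt_9 (ℓ1 ℓ2 C β ε : ℝ) (hℓ1 : 0 < ℓ1) (hℓ12 : ℓ1 ≤ ℓ2) (hC : 0 < C)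
    (hβ0 : 0 < β) (hβ1 : β ≤ 1) (hε0 : 0 < ε) (hε1 : ε < 1) :
    ∃ δ1 > (0 : ℝ), ∀ F F' : ℝ → ℝ,
      (∀ z : ℝ, HasDerivAt F (F' z) z) → F 0 = 0 →
      (∀ z : ℝ, ℓ1 ≤ F' z) → (∀ z : ℝ, F' z ≤ ℓ2) →
      ∀ y ∈ Set.Icc ε (1 - ε), ∀ v ∈ Set.Icc (0 : ℝ) 1, ∀ δ : ℝ, 0 < δ → δ ≤ δ1 →
        |v - psi (F y / ∫ l in (0 : ℝ)..1, F' (l * v))| ≤ C * δ ^ β →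
        |v - y| < ε :=
  stmt_9_general ℓ1 ℓ2 C β ε hℓ1 hℓ12 hC hβ0 hε0
end

section
/- Let 0 ≤ t0 < T, let α, γ, λ ∈ ℝ, and let c : [t0, T] → ℝ be continuous. Let U : [t0, T] → ℝ be differentiable with U'(t) = −(α − γ·U(t))·c(t) − λ·U(t) for all t ∈ [t0, T], and U(T) = 0. Then α − γ·U(t0) = α·exp(λ(T − t0))·exp(−γ∫_{t0}^T c(s) ds) − λ·α·∫_{t0}^T exp(∫_{t0}^t (λ − γ·c(s)) ds) dt. -/
/-- Deterministic core of the representation formula (eq. 15:2:55): if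
`U' = -(α - γU)c - λU` on `[t0, T]` with `U(T) = 0`, then
`α - γU(t0) = α e^{λ(T-t0)} e^{-γ∫_{t0}^T c} - λα ∫_{t0}^T e^{∫_{t0}^t (λ - γc)} dt`. -/
theorem stmt_12 (t0 T α γ lam : ℝ) (h0 : 0 ≤ t0) (hT : t0 < T)
    (c U : ℝ → ℝ) (hc : ContinuousOn c (Set.Icc t0 T))
    (hU : ∀ t ∈ Set.Icc t0 T,
      HasDerivWithinAt U (-(α - γ * U t) * c t - lam * U t) (Set.Icc t0 T) t)
    (hUT : U T = 0) :
    α - γ * U t0 =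
      α * Real.exp (lam * (T - t0)) * Real.exp (-γ * ∫ s in t0..T, c s)
        - lam * α * ∫ t in t0..T, Real.exp (∫ s in t0..t, (lam - γ * c s)) := by
  have hle : t0 ≤ T := hT.le
  set f : ℝ → ℝ := fun s => lam - γ * c s with hf
  have hfc : ContinuousOn f (Set.Icc t0 T) :=
    continuousOn_const.sub (continuousOn_const.mul hc)
  have hfi : IntervalIntegrable f MeasureTheory.volume t0 T :=
    (hfc.mono (by rw [Set.uIcc_of_le hle])).intervalIntegrable
  set F : ℝ → ℝ := fun t => ∫ s in t0..t, f s with hF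
  have hFc : ContinuousOn F (Set.Icc t0 T) := by
    have := intervalIntegral.continuousOn_primitive_interval
      (f := f) (μ := MeasureTheory.volume) (a := t0) (b := T)
      ((hfc.mono (by rw [Set.uIcc_of_le hle])).integrableOn_compact isCompact_uIcc)
    rwa [Set.uIcc_of_le hle] at this
  -- derivative of F at interior points
  have hFderiv : ∀ x ∈ Set.Ioo t0 T, HasDerivAt F (f x) x := by
    intro x hx
    have hx' : x ∈ Set.Icc t0 T := Set.Ioo_subset_Icc_self hx
    have hopen : Set.Icc t0 T ∈ nhds x := Icc_mem_nhds hx.1 hx.2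
    have hfi' : IntervalIntegrable f MeasureTheory.volume t0 x :=
      hfi.mono_set (by rw [Set.uIcc_of_le hle, Set.uIcc_of_le hx'.1]
                       exact Set.Icc_subset_Icc le_rfl hx'.2)
    have hmeas : StronglyMeasurableAtFilter f (nhds x) MeasureTheory.volume :=
      ContinuousOn.stronglyMeasurableAtFilter isOpen_Ioo
        (hfc.mono Set.Ioo_subset_Icc_self) x hx
    exact intervalIntegral.integral_hasDerivAt_right hfi' hmeas
      (hfc.continuousAt hopen)
  -- continuity of U
  have hUc : ContinuousOn U (Set.Icc t0 T) := fun t ht =>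
    (hU t ht).continuousWithinAt
  set g : ℝ → ℝ := fun t => (α - γ * U t) * Real.exp (F t) with hg
  have hgc : ContinuousOn g (Set.Icc t0 T) :=
    (continuousOn_const.sub (continuousOn_const.mul hUc)).mul
      (Real.continuous_exp.comp_continuousOn hFc)
  set g' : ℝ → ℝ := fun t => lam * α * Real.exp (F t) with hg'
  have hgderiv : ∀ x ∈ Set.Ioo t0 T, HasDerivWithinAt g (g' x) (Set.Ioi x) x := by
    intro x hx
    have hx' : x ∈ Set.Icc t0 T := Set.Ioo_subset_Icc_self hx
    have hopen : Set.Icc t0 T ∈ nhds x := Icc_mem_nhds hx.1 hx.2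
    have hU' : HasDerivAt U (-(α - γ * U x) * c x - lam * U x) x :=
      (hU x hx').hasDerivAt hopen
    have hE : HasDerivAt (fun t => Real.exp (F t)) (Real.exp (F x) * f x) x :=
      (hFderiv x hx).exp
    have : HasDerivAt g
        ((0 - (0 * U x + γ * (-(α - γ * U x) * c x - lam * U x))) * Real.exp (F x)
          + (α - γ * U x) * (Real.exp (F x) * f x)) x :=
      ((hasDerivAt_const x α).sub ((hasDerivAt_const x γ).mul hU')).mul hE
    have heq : (0 - (0 * U x + γ * (-(α - γ * U x) * c x - lam * U x))) * Real.exp (F x)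
          + (α - γ * U x) * (Real.exp (F x) * f x) = g' x := by
      simp only [hg', hf]; ring
    rw [heq] at this
    exact this.hasDerivWithinAt
  have hgint : IntervalIntegrable g' MeasureTheory.volume t0 T :=
    ((continuousOn_const.mul (Real.continuous_exp.comp_continuousOn hFc)).mono
      (by rw [Set.uIcc_of_le hle])).intervalIntegrable
  have key : ∫ t in t0..T, g' t = g T - g t0 :=
    intervalIntegral.integral_eq_sub_of_hasDeriv_right_of_le hle hgc hgderiv hgint
  have hci : IntervalIntegrable c MeasureTheory.volume t0 T :=
    (hc.mono (by rw [Set.uIcc_of_le hle])).intervalIntegrable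
  have hFT : F T = lam * (T - t0) - γ * ∫ s in t0..T, c s := by
    show (∫ s in t0..T, (lam - γ * c s)) = _
    rw [intervalIntegral.integral_sub intervalIntegrable_const (hci.const_mul γ),
      intervalIntegral.integral_const, intervalIntegral.integral_const_mul,
      smul_eq_mul]
    ring
  have hgT : g T = α * Real.exp (lam * (T - t0)) * Real.exp (-γ * ∫ s in t0..T, c s) := by
    rw [hg]
    simp only [hUT, mul_zero, sub_zero, hFT]
    rw [sub_eq_add_neg, Real.exp_add, ← neg_mul, mul_assoc]
  have hgt0 : g t0 = α - γ * U t0 := by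
    simp [hg, hF, intervalIntegral.integral_same]
  have hint : ∫ t in t0..T, g' t
      = lam * α * ∫ t in t0..T, Real.exp (∫ s in t0..t, (lam - γ * c s)) := by
    rw [hg']
    exact intervalIntegral.integral_const_mul _ _
  rw [← hgt0, ← hgT]
  linarith [key, hint]
end

section
/- Let 0 ≤ t0 < T and ℓ > 0. Let a : [t0, T] → ℝ be continuous with a(t) ≥ 0 for all t, let b : [t0, T] → ℝ be continuous, and let x : [t0, T] → ℝ be differentiable with x'(t) = a(t)·(ℓ·x(t) + b(t)) for all t ∈ [t0, T] and x(T) = 0. Then |x(t0)| ≤ ℓ^{−1}·(sup_{t∈[t0,T]} |b(t)|)·(1 − exp(−ℓ·∫_{t0}^T a(s) ds)); in particular |x(t0)| ≤ ℓ^{−1}·sup_{t∈[t0,T]} |b(t)|. -/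
/-!
With `A t = ∫_{t0}^t a` and the integrating factor `E = exp (-ℓ A)`, the equation becomes
`(x E)' = a b E`, and `|a b E| ≤ M a E = (-(M/ℓ) E)'` for `M = sup |b|`. Comparing the two
primitives on `[t0, T]` and using `x(T) = 0`, `E(t0) = 1` gives `|x(t0)| ≤ (M/ℓ) (1 - E(T))`.
-/

open Set

section FencingOnIcc

variable {E : Type*} [NormedAddCommGroup E] [NormedSpace ℝ E] {s t : ℝ}

theorem HasDerivWithinAt.Ici_of_Icc {f : ℝ → E} {f' : E} {u : ℝ}
    (h : HasDerivWithinAt f f' (Icc s t) u) (hu : u ∈ Ico s t) :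
    HasDerivWithinAt f f' (Ici u) u :=
  h.mono_of_mem_nhdsWithin (Icc_mem_nhdsGE_of_mem hu)

theorem norm_sub_le_sub_of_norm_deriv_le {f f' : ℝ → E} {B B' : ℝ → ℝ} (hst : s ≤ t)
    (hf : ∀ u ∈ Icc s t, HasDerivWithinAt f (f' u) (Icc s t) u)
    (hB : ∀ u ∈ Icc s t, HasDerivWithinAt B (B' u) (Icc s t) u)
    (bound : ∀ u ∈ Icc s t, ‖f' u‖ ≤ B' u) :
    ‖f t - f s‖ ≤ B t - B s :=
  image_norm_le_of_norm_deriv_right_le_deriv_boundary' (f := fun v => f v - f s)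
    (B := fun v => B v - B s)
    (fun u hu => (hf u hu).continuousWithinAt.sub continuousWithinAt_const)
    (fun u hu => ((hf u (Ico_subset_Icc_self hu)).Ici_of_Icc hu).sub_const _) (by simp)
    (fun u hu => (hB u hu).continuousWithinAt.sub continuousWithinAt_const)
    (fun u hu => ((hB u (Ico_subset_Icc_self hu)).Ici_of_Icc hu).sub_const _)
    (fun u hu => bound u (Ico_subset_Icc_self hu)) (right_mem_Icc.2 hst)

end FencingOnIcc

theorem hasDerivWithinAt_integral_Icc {a : ℝ → ℝ} {t0 T t : ℝ}
    (ha : ContinuousOn a (Icc t0 T)) (ht : t ∈ Icc t0 T) :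
    HasDerivWithinAt (fun u => ∫ s in t0..u, a s) (a t) (Icc t0 T) t := by
  have : Fact (t ∈ Icc t0 T) := ⟨ht⟩
  refine intervalIntegral.integral_hasDerivWithinAt_right ?_
    ⟨Icc t0 T, self_mem_nhdsWithin, ha.aestronglyMeasurable measurableSet_Icc⟩ (ha t ht)
  refine (ha.mono ?_).intervalIntegrable
  rw [uIcc_of_le ht.1]
  exact Icc_subset_Icc le_rfl ht.2

section IntegratingFactor

variable {x A : ℝ → ℝ} {a b ℓ t : ℝ} {s : Set ℝ}

theorem HasDerivWithinAt.mul_exp_neg_mul_of_linear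
    (hx : HasDerivWithinAt x (a * (ℓ * x t + b)) s t) (hA : HasDerivWithinAt A a s t) :
    HasDerivWithinAt (fun u => x u * Real.exp (-(ℓ * A u)))
      (a * b * Real.exp (-(ℓ * A t))) s t :=
  (hx.fun_mul (hA.const_mul ℓ).fun_neg.exp).congr_deriv (by ring)

theorem HasDerivWithinAt.const_mul_exp_neg_mul (M : ℝ) (hℓ : ℓ ≠ 0)
    (hA : HasDerivWithinAt A a s t) :
    HasDerivWithinAt (fun u => -(M / ℓ) * Real.exp (-(ℓ * A u)))
      (M * a * Real.exp (-(ℓ * A t))) s t :=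
  ((hA.const_mul ℓ).fun_neg.exp.const_mul (-(M / ℓ))).congr_deriv (by field_simp)

end IntegratingFactor

theorem stmt_13_general (t0 T ℓ : ℝ) (hT : t0 < T) (hℓ : 0 < ℓ)
    (a b x : ℝ → ℝ)
    (ha : ContinuousOn a (Set.Icc t0 T)) (ha0 : ∀ t ∈ Set.Icc t0 T, 0 ≤ a t)
    (hb : ContinuousOn b (Set.Icc t0 T))
    (hx : ∀ t ∈ Set.Icc t0 T,
      HasDerivWithinAt x (a t * (ℓ * x t + b t)) (Set.Icc t0 T) t)
    (hxT : x T = 0) :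
    |x t0| ≤ ℓ⁻¹ * sSup ((fun t => |b t|) '' Set.Icc t0 T) *
      (1 - Real.exp (-ℓ * ∫ s in t0..T, a s)) ∧
    |x t0| ≤ ℓ⁻¹ * sSup ((fun t => |b t|) '' Set.Icc t0 T) := by
  set M := sSup ((fun t => |b t|) '' Set.Icc t0 T)
  have hM : ∀ t ∈ Icc t0 T, |b t| ≤ M := fun t ht =>
    le_csSup (isCompact_Icc.image_of_continuousOn hb.abs).bddAbove ⟨t, ht, rfl⟩
  have hM0 : 0 ≤ M := (abs_nonneg _).trans (hM T (right_mem_Icc.2 hT.le))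
  have hA : ∀ t ∈ Icc t0 T,
      HasDerivWithinAt (fun u => ∫ s in t0..u, a s) (a t) (Icc t0 T) t :=
    fun t ht => hasDerivWithinAt_integral_Icc ha ht
  have hbound : ∀ t ∈ Icc t0 T, ‖a t * b t * Real.exp (-(ℓ * ∫ s in t0..t, a s))‖ ≤
      M * a t * Real.exp (-(ℓ * ∫ s in t0..t, a s)) := fun t ht => by
    rw [Real.norm_eq_abs, abs_mul, abs_mul, abs_of_nonneg (ha0 t ht),
      abs_of_pos (Real.exp_pos _), mul_comm (a t)]
    gcongr
    exacts [ha0 t ht, hM t ht]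
  have hsharp : |x t0| ≤ ℓ⁻¹ * M * (1 - Real.exp (-ℓ * ∫ s in t0..T, a s)) := by
    convert norm_sub_le_sub_of_norm_deriv_le hT.le
      (fun t ht => (hx t ht).mul_exp_neg_mul_of_linear (hA t ht))
      (fun t ht => (hA t ht).const_mul_exp_neg_mul M hℓ.ne') hbound using 1
    · simp [hxT]
    · simp only [intervalIntegral.integral_same, mul_zero, neg_zero, Real.exp_zero, neg_mul]
      field_simp
      ring
  exact ⟨hsharp, hsharp.trans (mul_le_of_le_one_right (mul_nonneg (inv_nonneg.2 hℓ.le) hM0)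
    (sub_le_self _ (Real.exp_pos _).le))⟩

/-- Deterministic comparison estimate from the proof of Proposition `prop:26:2:1`:
if `x' = a·(ℓx + b)` on `[t0,T]` with `a ≥ 0` continuous, `b` continuous and
`x(T) = 0`, then `|x(t0)| ≤ ℓ⁻¹ (sup |b|) (1 - e^{-ℓ∫_{t0}^T a})`; in particular
`|x(t0)| ≤ ℓ⁻¹ sup |b|`. -/
theorem stmt_13 (t0 T ℓ : ℝ) (h0 : 0 ≤ t0) (hT : t0 < T) (hℓ : 0 < ℓ)
    (a b x : ℝ → ℝ)
    (ha : ContinuousOn a (Set.Icc t0 T)) (ha0 : ∀ t ∈ Set.Icc t0 T, 0 ≤ a t)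
    (hb : ContinuousOn b (Set.Icc t0 T))
    (hx : ∀ t ∈ Set.Icc t0 T,
      HasDerivWithinAt x (a t * (ℓ * x t + b t)) (Set.Icc t0 T) t)
    (hxT : x T = 0) :
    |x t0| ≤ ℓ⁻¹ * sSup ((fun t => |b t|) '' Set.Icc t0 T) *
      (1 - Real.exp (-ℓ * ∫ s in t0..T, a s)) ∧
    |x t0| ≤ ℓ⁻¹ * sSup ((fun t => |b t|) '' Set.Icc t0 T) :=
  stmt_13_general t0 T ℓ hT hℓ a b x ha ha0 hb hx hxT
end

section
/- Let ℓ > 0, Δ > 0, δ > 0, Λ ∈ ℝ and η ∈ [0,1]. Let v : ℝ → [0,1] be Lipschitz with constant 1/(ℓΔ), and suppose that v(x) ≥ 1 − η for every x ≥ Λ + ℓΔ + δ and v(x) ≤ η for every x ≤ Λ − δ. Then for every x ∈ ℝ: |v(x) − ψ((x − Λ)/(ℓΔ))| ≤ η + δ/(ℓΔ). -/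
/-- Real-variable core of Lemma `lem:22:12:1`: if `v : ℝ → [0,1]` is
`1/(ℓΔ)`-Lipschitz, `v ≥ 1 - η` on `[Λ + ℓΔ + δ, ∞)` and `v ≤ η` on `(-∞, Λ - δ]`,
then `|v(x) - ψ((x - Λ)/(ℓΔ))| ≤ η + δ/(ℓΔ)` for all `x`. -/
theorem stmt_14 (ℓ Δ δ Λ η : ℝ) (hℓ : 0 < ℓ) (hΔ : 0 < Δ) (hδ : 0 < δ)
    (hη0 : 0 ≤ η) (hη1 : η ≤ 1)
    (v : ℝ → ℝ)
    (hrange : ∀ x, v x ∈ Set.Icc (0 : ℝ) 1)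
    (hlip : ∀ x y : ℝ, |v x - v y| ≤ (1 / (ℓ * Δ)) * |x - y|)
    (hupper : ∀ x : ℝ, Λ + ℓ * Δ + δ ≤ x → 1 - η ≤ v x)
    (hlower : ∀ x : ℝ, x ≤ Λ - δ → v x ≤ η) :
    ∀ x : ℝ, |v x - psi ((x - Λ) / (ℓ * Δ))| ≤ η + δ / (ℓ * Δ) := by
  intro x
  have hL : (0:ℝ) < ℓ * Δ := mul_pos hℓ hΔ
  have hδL : 0 < δ / (ℓ * Δ) := div_pos hδ hL
  obtain ⟨h0, h1⟩ := hrange x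
  -- two-sided Lipschitz against the two boundary points
  have lipA := abs_le.mp (hlip x (Λ - δ))
  have lipB := abs_le.mp (hlip x (Λ + ℓ * Δ + δ))
  have hvA := hlower (Λ - δ) le_rfl
  have hvA0 := (hrange (Λ - δ)).1
  have hvB := hupper (Λ + ℓ * Δ + δ) le_rfl
  have hvB1 := (hrange (Λ + ℓ * Δ + δ)).2
  unfold psi
  split_ifs with h h2
  · -- x < Λ
    have hx : x - Λ < 0 := by
      have := (div_lt_iff₀ hL).mp h; linarith
    rw [sub_zero, abs_of_nonneg h0]
    rcases le_or_gt x (Λ - δ) with hc | hc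
    · have := hlower x hc; linarith
    · have habs : |x - (Λ - δ)| ≤ δ := by
        rw [abs_of_nonneg (by linarith)]; linarith
      have : v x - v (Λ - δ) ≤ (1 / (ℓ * Δ)) * δ :=
        lipA.2.trans (by
          have h1L : 0 < 1 / (ℓ * Δ) := by positivity
          exact mul_le_mul_of_nonneg_left habs h1L.le)
      have hdd : (1 / (ℓ * Δ)) * δ = δ / (ℓ * Δ) := by ring
      linarith [hdd ▸ this]
  · -- 0 ≤ (x-Λ)/(ℓΔ) ≤ 1
    push_neg at h
    have hx0 : 0 ≤ x - Λ := by
      by_contra hc; push_neg at hc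
      exact absurd (div_neg_of_neg_of_pos hc hL) (not_lt.mpr h)
    have hx1 : x - Λ ≤ ℓ * Δ := by
      have := (div_le_one hL).mp h2; linarith
    have habsA : |x - (Λ - δ)| = (x - Λ) + δ := by
      rw [abs_of_nonneg (by linarith)]; ring
    have habsB : |x - (Λ + ℓ * Δ + δ)| = (ℓ * Δ - (x - Λ)) + δ := by
      rw [abs_of_nonpos (by linarith)]; ring
    rw [habsA] at lipA
    rw [habsB] at lipB
    rw [abs_le]
    have key1 : (1 / (ℓ * Δ)) * ((x - Λ) + δ) = (x - Λ) / (ℓ * Δ) + δ / (ℓ * Δ) := by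
      field_simp
    have key2 : (1 / (ℓ * Δ)) * ((ℓ * Δ - (x - Λ)) + δ)
        = 1 - (x - Λ) / (ℓ * Δ) + δ / (ℓ * Δ) := by
      field_simp
    constructor
    · -- lower bound: v x ≥ e - η - δ/L
      have := lipB.1
      rw [key2] at this
      linarith
    · have := lipA.2
      rw [key1] at this
      linarith
  · -- e > 1, x > Λ + ℓΔ
    push_neg at h h2
    have hx : Λ + ℓ * Δ < x := by
      have := (one_lt_div hL).mp h2; linarith
    have hvx : 1 - η - δ / (ℓ * Δ) ≤ v x := by
      rcases le_or_gt (Λ + ℓ * Δ + δ) x with hc | hc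
      · have := hupper x hc; linarith
      · have habs : |x - (Λ + ℓ * Δ + δ)| ≤ δ := by
          rw [abs_of_nonpos (by linarith)]; linarith
        have h1L : 0 ≤ 1 / (ℓ * Δ) := by positivity
        have := lipB.1
        have hb : -((1 / (ℓ * Δ)) * δ) ≤ v x - v (Λ + ℓ * Δ + δ) := by
          have := lipB.1
          have h2' : (1 / (ℓ * Δ)) * |x - (Λ + ℓ * Δ + δ)| ≤ (1 / (ℓ * Δ)) * δ :=
            mul_le_mul_of_nonneg_left habs h1L
          linarith
        have hdd : (1 / (ℓ * Δ)) * δ = δ / (ℓ * Δ) := by ring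
        rw [hdd] at hb
        linarith
    rw [abs_of_nonpos (by linarith)]
    linarith
end
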